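/- Let α ∈ (1, 2], d ≥ 1 an integer, β ∈ (-1, 0], and p, q, r ∈ [1, ∞] (with the conventions d/∞ = 0, α/∞ = 0), and assume condition (C0_S): β > 2 - (3/2)α + d/p + α/r. Set Γ := β - (1 - α + d/p + α/r). Then: (i) Γ > 1 - α/2 and r > α/(α - 1); (ii) there exist ϑ̄ ∈ (0, 1), sc ∈ (α/(α-1), r), and ℓ ∈ (max(2d/α, 2), ∞) such that γ := ϑ̄ Γ ∈ (1 - α/2, 1), α/sc + d/ℓ < α - 1, and sc · r/(r - sc) < α/(-β + ϑ̄Γ + d/p) (with the convention that the last bound is +∞ when -β + ϑ̄Γ + d/p = 0). -/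

import Mathlib

open scoped ENNReal

set_option maxHeartbeats 1000000

/-- Under condition (C0_S): `β > 2 - (3/2)α + d/p + α/r`, with gap
`Γ = β - (1 - α + d/p + α/r)`, one has `Γ > 1 - α/2`, `r > α/(α-1)`, and the
parameters of the Xie–Zhang strong-uniqueness criterion can be met:
there are `ϑ̄ ∈ (0,1)`, `sc ∈ (α/(α-1), r)`, `ℓ ∈ (max(2d/α,2), ∞)` with
`γ = ϑ̄Γ ∈ (1 - α/2, 1)`, `α/sc + d/ℓ < α - 1` and
`sc·r/(r-sc) < α/(-β + ϑ̄Γ + d/p)` (the latter stated equivalently as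
`(-β + ϑ̄Γ + d/p)/α < 1/sc - 1/r`, which also encodes the convention that the
bound is `+∞` when `-β + ϑ̄Γ + d/p = 0`). -/
theorem statement16 (α : ℝ) (hα : α ∈ Set.Ioc (1 : ℝ) 2) (d : ℕ) (hd : 1 ≤ d)
    (β : ℝ) (hβ : β ∈ Set.Ioc (-1 : ℝ) 0) (p q r : ℝ≥0∞)
    (hp : 1 ≤ p) (hq : 1 ≤ q) (hr : 1 ≤ r)
    (Γ : ℝ) (hΓ : Γ = β - (1 - α + (d : ℝ) * p⁻¹.toReal + α * r⁻¹.toReal))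
    (hC0S : 2 - 3 / 2 * α + (d : ℝ) * p⁻¹.toReal + α * r⁻¹.toReal < β) :
    (1 - α / 2 < Γ ∧ ENNReal.ofReal (α / (α - 1)) < r) ∧
    ∃ ϑ sc ℓ : ℝ, ϑ ∈ Set.Ioo (0 : ℝ) 1 ∧
      α / (α - 1) < sc ∧ ENNReal.ofReal sc < r ∧
      max (2 * (d : ℝ) / α) 2 < ℓ ∧
      ϑ * Γ ∈ Set.Ioo (1 - α / 2) 1 ∧
      α / sc + (d : ℝ) / ℓ < α - 1 ∧
      (-β + ϑ * Γ + (d : ℝ) * p⁻¹.toReal) / α < 1 / sc - r⁻¹.toReal := by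
  obtain ⟨hα1, hα2⟩ := hα
  obtain ⟨hβ1, hβ2⟩ := hβ
  set P : ℝ := (d : ℝ) * p⁻¹.toReal with hPdef
  set ρ : ℝ := r⁻¹.toReal with hρdef
  have hρinv : r ≠ ⊤ → ρ = 1 / r.toReal := fun h => by
    rw [hρdef, ENNReal.toReal_inv, one_div]
  clear_value P ρ
  have hdpos : (1 : ℝ) ≤ (d : ℝ) := by exact_mod_cast hd
  have hP : 0 ≤ P := by rw [hPdef]; positivity
  have hρ0 : 0 ≤ ρ := by rw [hρdef]; positivity
  have hαpos : (0 : ℝ) < α := by linarith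
  have hα1' : (0 : ℝ) < α - 1 := by linarith
  have hΓlb : 1 - α / 2 < Γ := by rw [hΓ]; linarith
  have hΓpos : 0 < Γ := by linarith
  have hΓub : Γ ≤ α - 1 - α * ρ := by rw [hΓ]; linarith
  have hρlt : α * ρ < α - 1 := by linarith
  -- generic lemma: if sc > 0 and ρ < 1/sc then ofReal sc < r
  have hscr : ∀ s : ℝ, 0 < s → ρ < 1 / s → ENNReal.ofReal s < r := by
    intro s hs hρs
    rcases eq_or_ne r ⊤ with h | h
    · simp [h]
    · have hr0 : r ≠ 0 := (zero_lt_one.trans_le hr).ne'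
      have hrt : 0 < r.toReal := ENNReal.toReal_pos hr0 h
      have hsr : s < r.toReal := by
        rw [hρinv h, div_lt_div_iff₀ hrt hs] at hρs
        linarith
      calc ENNReal.ofReal s < ENNReal.ofReal r.toReal :=
            (ENNReal.ofReal_lt_ofReal_iff hrt).mpr hsr
        _ = r := ENNReal.ofReal_toReal h
  have part1 : ENNReal.ofReal (α / (α - 1)) < r := by
    apply hscr _ (by positivity)
    rw [one_div_div]
    rw [lt_div_iff₀ hαpos]
    linarith [mul_comm ρ α]
  -- choice of ϑ
  have hαρ : 0 ≤ α * ρ := mul_nonneg hαpos.le hρ0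
  set ϑ : ℝ := (1 - α / 2 + Γ) / (2 * Γ) with hϑdef
  clear_value ϑ
  have hnum : 0 < 1 - α / 2 + Γ := by linarith
  have hϑ0 : 0 < ϑ := by
    rw [hϑdef]; exact div_pos hnum (by positivity)
  have hϑ1 : ϑ < 1 := by
    rw [hϑdef, div_lt_one (by positivity)]
    linarith
  have hγ : ϑ * Γ = (1 - α / 2 + Γ) / 2 := by
    rw [hϑdef]; field_simp [hΓpos.ne']
  have hγlb : 1 - α / 2 < ϑ * Γ := by rw [hγ]; linarith
  have hγub : ϑ * Γ < 1 := by rw [hγ]; linarith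
  have hϑΓlt : ϑ * Γ < Γ := by rw [hγ]; linarith
  have hx : -β + ϑ * Γ + P < α - 1 - α * ρ := by
    have : -β + Γ + P = α - 1 - α * ρ := by rw [hΓ]; ring
    linarith
  have hϑΓpos : 0 < ϑ * Γ := by rw [hγ]; linarith
  have hnum2 : 0 < -β + ϑ * Γ + P := by linarith
  set A : ℝ := (-β + ϑ * Γ + P) / α + ρ with hAdef
  clear_value A
  have hA1 : ρ < A := by
    have := div_pos hnum2 hαpos
    rw [hAdef]; linarith
  have hA0 : 0 < A := lt_of_le_of_lt hρ0 hA1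
  have hA2 : A < (α - 1) / α := by
    rw [lt_div_iff₀ hαpos, hAdef, add_mul, div_mul_cancel₀ _ hαpos.ne']
    linarith [mul_comm ρ α]
  set D : ℝ := A + (α - 1) / α with hDdef
  clear_value D
  have hD0 : 0 < D := by
    have : 0 < (α - 1) / α := div_pos hα1' hαpos
    rw [hDdef]; linarith
  set sc : ℝ := 2 / D with hscdef
  clear_value sc
  have hsc0 : 0 < sc := by rw [hscdef]; exact div_pos two_pos hD0
  have hDlt : D < 2 * ((α - 1) / α) := by rw [hDdef]; linarith
  have hkey : 2 * ((α - 1) / α) * α = 2 * (α - 1) := by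
    rw [mul_assoc, div_mul_cancel₀ _ hαpos.ne']
  have hαD : α * D < 2 * (α - 1) := by
    have h3 := mul_lt_mul_of_pos_left hDlt hαpos
    linarith [mul_comm α (2 * ((α - 1) / α))]
  have hsc1 : α / (α - 1) < sc := by
    rw [hscdef, div_lt_div_iff₀ hα1' hD0]
    linarith
  have hρD : ρ < (α - 1) / α := by rw [lt_div_iff₀ hαpos]; linarith [mul_comm ρ α]
  have hsc2 : ENNReal.ofReal sc < r := by
    apply hscr _ hsc0
    rw [hscdef, one_div_div]
    rw [hDdef]
    linarith
  have hlast : (-β + ϑ * Γ + P) / α < 1 / sc - ρ := by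
    rw [hscdef, one_div_div, hDdef]
    have : (-β + ϑ * Γ + P) / α = A - ρ := by rw [hAdef]; ring
    rw [this]
    linarith
  -- choice of ℓ
  have hscval : α / sc = α * D / 2 := by
    rw [hscdef, div_div_eq_mul_div]
  set g : ℝ := (α - 1) - α * D / 2 with hgdef
  clear_value g
  have hg : 0 < g := by rw [hgdef]; linarith
  set M : ℝ := max (2 * (d : ℝ) / α) 2 with hMdef
  have hM2 : (2 : ℝ) ≤ M := by rw [hMdef]; exact le_max_right _ _
  clear_value M
  set ℓ : ℝ := M + 1 + 2 * (d : ℝ) / g with hℓdef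
  clear_value ℓ
  have h2dg : 0 < 2 * (d : ℝ) / g := by positivity
  have hℓM : M < ℓ := by rw [hℓdef]; linarith
  have hℓpos : 0 < ℓ := by linarith
  have hdl : (d : ℝ) / ℓ < g := by
    rw [div_lt_iff₀ hℓpos, hℓdef]
    have h1 : 2 * (d : ℝ) / g * g = 2 * (d : ℝ) := div_mul_cancel₀ _ hg.ne'
    have h2 : g * (M + 1 + 2 * (d : ℝ) / g) = g * (M + 1) + 2 * (d : ℝ) / g * g := by
      ring
    have h3 : 0 < g * (M + 1) := mul_pos hg (by linarith)
    linarith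
  refine ⟨⟨hΓlb, part1⟩, ϑ, sc, ℓ, ⟨hϑ0, hϑ1⟩, hsc1, hsc2, hℓM, ⟨hγlb, hγub⟩, ?_, hlast⟩
  rw [hscval]
  have : α * D / 2 = (α - 1) - g := by rw [hgdef]; ring
  rw [this]
  linarith
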